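/- Let σ_1, …, σ_n be i.i.d. uniform spins in {+,-}, let σ̂ be any labelling of the n vertices with |{u : σ̂_u = +}| = n/2, let f(n) = (1/n)Σ_{u=1}^n 1{σ_u = σ̂_u}, and let E be the event that n_+ := |{u : σ_u = +}| lies in (n/2 - n^{3/4}, n/2 + n^{3/4}). Fix δ > 0. Then for u, v chosen uniformly at random (distinct), and uniformly over ε ≥ δ/2: P(σ_u = σ_v = + | σ̂_u = σ̂_v = +, f(n) = 1/2 + ε, E) → (1/2 + ε)², P(σ_u = σ_v = - | σ̂_u = σ̂_v = +, f(n) = 1/2 + ε, E) → (1/2 - ε)², and hence P(σ_u = σ_v | σ̂_u = σ̂_v = +, f(n) = 1/2 + ε, E) → 1/2 + 2ε² as n → ∞; in particular there exists N = N(δ) such that for all n ≥ N and all ε ≥ δ/2, P(σ_u = σ_v | σ̂_u = σ̂_v = +, f(n) = 1/2 + ε, E) ≥ 1/2 + ε². -/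

import Mathlib

noncomputable section

/-- The conditional probability of `T` given `S` under the uniform distribution on a finite
type, computed by counting. -/
def uniformCondProb {α : Type*} (T S : Set α) : ℝ :=
  ((T ∩ S).ncard : ℝ) / (S.ncard : ℝ)

/-- The conditioning event: `u ≠ v`, `σh_u = σh_v = +`, the overlap equals `1/2 + ε`, and the
event `E` that `n₊ = |{w : σ_w = +}|` lies in `(n/2 - n^{3/4}, n/2 + n^{3/4})`.  Here a point
of the sample space is a triple `(σ, u, v)` consisting of the spin configuration and the two
chosen vertices. -/
def condEvent (n : ℕ) (σh : Fin n → Bool) (ε : ℝ) :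
    Set ((Fin n → Bool) × Fin n × Fin n) :=
  {p | p.2.1 ≠ p.2.2 ∧ σh p.2.1 = true ∧ σh p.2.2 = true ∧
    ({w | p.1 w = σh w}.ncard : ℝ) = ((1 : ℝ) / 2 + ε) * n ∧
    |({w | p.1 w = true}.ncard : ℝ) - (n : ℝ) / 2| < (n : ℝ) ^ ((3 : ℝ) / 4)}


/-!
Conditioning on the overlap and on `E` constrains `σ` alone, so given `σ` the pair `(u, v)` is
uniform among ordered pairs of distinct vertices labelled `+`. If `k` of these `m = n/2`
vertices carry spin `+`, the two pair probabilities are `k(k-1)/(m(m-1))` and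
`(m-k)(m-k-1)/(m(m-1))`. Counting gives `overlap + n₊ = 2k + m`, so the overlap constraint and
`E` pin `k` to within `n^{3/4}/2` of `(1/2 + ε)m`; hence both ratios are `(1/2 ± ε)²` up to
`O(n^{-1/4})`, uniformly in `ε`. Agreement is the disjoint union of the two events, and
`2ε² - O(n^{-1/4}) ≥ ε²` once `ε ≥ δ/2` and `n` is large.
-/

open Finset Filter Topology

theorem uniformCondProb_union {α : Type*} [Finite α] {T₁ T₂ : Set α} (h : Disjoint T₁ T₂)
    (S : Set α) :
    uniformCondProb (T₁ ∪ T₂) S = uniformCondProb T₁ S + uniformCondProb T₂ S := by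
  rw [uniformCondProb, uniformCondProb, uniformCondProb, Set.union_inter_distrib_right,
    Set.ncard_union_eq (h.mono Set.inter_subset_left Set.inter_subset_left), Nat.cast_add,
    add_div]

theorem uniformCondProb_eq_add {α : Type*} [Finite α] (f g : α → Bool) (S : Set α) :
    uniformCondProb {p | f p = g p} S
      = uniformCondProb {p | f p = true ∧ g p = true} S
        + uniformCondProb {p | f p = false ∧ g p = false} S := by
  have hunion : {p | f p = g p}
      = {p | f p = true ∧ g p = true} ∪ {p | f p = false ∧ g p = false} := by
    ext p
    simp only [Set.mem_ofPred_eq, Set.mem_union]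
    cases f p <;> cases g p <;> decide
  refine hunion ▸ uniformCondProb_union (Set.disjoint_left.2 fun p h h' => ?_) S
  simp_all

theorem abs_uniformCondProb_prod_sub_le {α β : Type*} [DecidableEq α] [DecidableEq β]
    {G : Finset α} {X : Finset β} (hG : G.Nonempty) (hX : X.Nonempty) (T : Set (α × β))
    [DecidablePred (· ∈ T)] {t r : ℝ}
    (h : ∀ a ∈ G, |(#{b ∈ X | (a, b) ∈ T} : ℝ) / #X - t| ≤ r) :
    |uniformCondProb T ↑(G ×ˢ X) - t| ≤ r := by
  have hG' : (0 : ℝ) < #G := by exact_mod_cast hG.card_pos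
  have hX' : (0 : ℝ) < #X := by exact_mod_cast hX.card_pos
  have hfib : (T ∩ ↑(G ×ˢ X)).ncard = ∑ a ∈ G, #{b ∈ X | (a, b) ∈ T} := by
    have : T ∩ ↑(G ×ˢ X) = ↑((G ×ˢ X).filter (· ∈ T)) := by ext; simp [and_comm]
    simp only [this, Set.ncard_coe_finset, card_filter, sum_product]
  have hmean : uniformCondProb T ↑(G ×ˢ X) - t
      = (∑ a ∈ G, ((#{b ∈ X | (a, b) ∈ T} : ℝ) / #X - t)) / #G := by
    rw [uniformCondProb, hfib, Set.ncard_coe_finset, card_product, sum_sub_distrib, ← sum_div,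
      sum_const, nsmul_eq_mul]
    push_cast
    field_simp
  rw [hmean, abs_div, abs_of_pos hG', div_le_iff₀ hG']
  calc _ ≤ ∑ a ∈ G, |(#{b ∈ X | (a, b) ∈ T} : ℝ) / #X - t| := abs_sum_le_sum_abs _ _
    _ ≤ ∑ _a ∈ G, r := sum_le_sum h
    _ = r * #G := by rw [sum_const, nsmul_eq_mul, mul_comm]

theorem Finset.offDiag_filter_and {α : Type*} [DecidableEq α] (s : Finset α) (P : α → Prop)
    [DecidablePred P] :
    s.offDiag.filter (fun q => P q.1 ∧ P q.2) = (s.filter P).offDiag := by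
  ext ⟨u, v⟩
  simp only [mem_filter, mem_offDiag]
  tauto

theorem Finset.cast_card_offDiag {α R : Type*} [DecidableEq α] [Ring R] (s : Finset α) :
    (#s.offDiag : R) = #s * (#s - 1) := by
  rw [offDiag_card, Nat.cast_sub (Nat.le_mul_self _), Nat.cast_mul, mul_sub_one]

theorem abs_mul_pred_div_sub_sq_le {k m s c : ℝ} (hm : 2 ≤ m) (hk0 : 0 ≤ k) (hkm : k ≤ m)
    (hs0 : 0 ≤ s) (hs1 : s ≤ 1) (hc : |k - s * m| ≤ c) :
    |k * (k - 1) / (m * (m - 1)) - s ^ 2| ≤ (4 * c + 2) / m := by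
  have hD : 0 < m * (m - 1) := by nlinarith
  have hprod : |(k - s * m) * (k + s * m - 1)| ≤ c * (2 * m) := by
    rw [abs_mul]
    exact mul_le_mul hc (abs_le.2 ⟨by nlinarith, by nlinarith⟩) (abs_nonneg _)
      ((abs_nonneg _).trans hc)
  have hvar : |s * (1 - s) * m| ≤ m := by
    have hm0 : 0 ≤ m := by linarith
    rw [abs_le]; constructor <;>
      nlinarith [mul_nonneg (mul_nonneg hs0 (sub_nonneg.2 hs1)) hm0, mul_nonneg (sq_nonneg s) hm0]
  have hnum : |k * (k - 1) - m * (m - 1) * s ^ 2| ≤ (2 * c + 1) * m := by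
    calc _ = |(k - s * m) * (k + s * m - 1) - s * (1 - s) * m| := by ring_nf
      _ ≤ c * (2 * m) + m := (abs_sub _ _).trans (add_le_add hprod hvar)
      _ = (2 * c + 1) * m := by ring
  rw [div_sub' hD.ne', abs_div, abs_of_pos hD, div_le_div_iff₀ hD (by linarith)]
  nlinarith [mul_le_mul_of_nonneg_right hnum (by linarith : (0 : ℝ) ≤ m),
    (abs_nonneg _).trans hnum]

theorem card_agree_add_card_true {ι : Type*} [Fintype ι] (σ σh : ι → Bool) :
    #{w | σ w = σh w} + #{w | σ w = true}
      = 2 * #{w | σh w = true ∧ σ w = true} + #{w | σh w = false} := by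
  simp only [card_filter, mul_sum, ← sum_add_distrib]
  refine sum_congr rfl fun w _ => ?_
  cases σ w <;> cases σh w <;> rfl

def pairError (n : ℕ) : ℝ := (4 * (n : ℝ) ^ ((3 : ℝ) / 4) + 4) / n

theorem pairError_nonneg (n : ℕ) : 0 ≤ pairError n := by
  unfold pairError; positivity

theorem tendsto_pairError : Tendsto pairError atTop (𝓝 0) := by
  have hlim : Tendsto (fun n : ℕ => 4 * (n : ℝ) ^ (-(1 / 4 : ℝ)) + 4 * (n : ℝ)⁻¹) atTop
      (𝓝 (4 * 0 + 4 * 0)) :=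
    (((tendsto_rpow_neg_atTop (by norm_num)).comp tendsto_natCast_atTop_atTop).const_mul 4).add
      (tendsto_inv_atTop_zero.comp tendsto_natCast_atTop_atTop |>.const_mul 4)
  rw [mul_zero, add_zero] at hlim
  refine hlim.congr' ((eventually_gt_atTop 0).mono fun n hn => ?_)
  have hn' : (0 : ℝ) < n := by exact_mod_cast hn
  rw [pairError, add_div, mul_div_assoc, ← Real.rpow_sub_one hn'.ne', div_eq_mul_inv 4]
  norm_num

def spinEvent (n : ℕ) (σh : Fin n → Bool) (ε : ℝ) : Finset (Fin n → Bool) :=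
  univ.filter fun σ => ({w | σ w = σh w}.ncard : ℝ) = ((1 : ℝ) / 2 + ε) * n ∧
    |({w | σ w = true}.ncard : ℝ) - (n : ℝ) / 2| < (n : ℝ) ^ ((3 : ℝ) / 4)

theorem condEvent_eq_coe_prod (n : ℕ) (σh : Fin n → Bool) (ε : ℝ) :
    condEvent n σh ε
      = ↑(spinEvent n σh ε ×ˢ (univ.filter fun u => σh u = true).offDiag) := by
  ext ⟨σ, u, v⟩
  simp only [condEvent, spinEvent, Set.mem_ofPred_eq, coe_product, Set.mem_prod, mem_coe,
    mem_filter, mem_univ, true_and, mem_offDiag]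
  tauto

theorem abs_card_filter_true_sub_le {n : ℕ} {σh σ : Fin n → Bool} {ε : ℝ}
    (hbal : 2 * #{u | σh u = true} = n) (hσ : σ ∈ spinEvent n σh ε) :
    |(#{u ∈ univ.filter (σh · = true) | σ u = true} : ℝ)
        - (1 / 2 + ε) * #{u | σh u = true}|
      ≤ (n : ℝ) ^ ((3 : ℝ) / 4) / 2 := by
  simp only [spinEvent, mem_filter, mem_univ, true_and, Set.ncard_eq_toFinset_card',
    Set.toFinset_ofPred] at hσ
  obtain ⟨hagree, hpos⟩ := hσ
  have hsplit := card_filter_add_card_filter_not (s := univ) fun u => σh u = true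
  simp only [Bool.not_eq_true, card_univ, Fintype.card_fin] at hsplit
  have hidR : (#{w | σ w = σh w} : ℝ) + #{w | σ w = true}
      = 2 * #{w | σh w = true ∧ σ w = true} + #{w | σh w = false} := by
    exact_mod_cast card_agree_add_card_true σ σh
  have hsplitR : (#{u | σh u = true} : ℝ) + #{u | σh u = false} = n := by exact_mod_cast hsplit
  have hn : (n : ℝ) = 2 * #{u | σh u = true} := by exact_mod_cast hbal.symm
  rw [hn] at hagree
  obtain ⟨hlo, hhi⟩ := abs_lt.mp hpos
  rw [filter_filter, abs_le]
  constructor <;> linarith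

theorem abs_card_filter_false_sub_le {n : ℕ} {σh σ : Fin n → Bool} {ε : ℝ}
    (hbal : 2 * #{u | σh u = true} = n) (hσ : σ ∈ spinEvent n σh ε) :
    |(#{u ∈ univ.filter (σh · = true) | σ u = false} : ℝ)
        - (1 / 2 - ε) * #{u | σh u = true}|
      ≤ (n : ℝ) ^ ((3 : ℝ) / 4) / 2 := by
  have hsplit := card_filter_add_card_filter_not (s := univ.filter (σh · = true))
    fun u => σ u = true
  simp only [Bool.not_eq_true] at hsplit
  rw [← Nat.sub_eq_of_eq_add' hsplit.symm, Nat.cast_sub (by omega), ← abs_neg]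
  convert abs_card_filter_true_sub_le hbal hσ using 2
  ring

theorem half_add_mem_Icc_of_condEvent_nonempty {n : ℕ} {σh : Fin n → Bool} {ε : ℝ}
    (hne : (condEvent n σh ε).Nonempty) : 1 / 2 + ε ∈ Set.Icc (0 : ℝ) 1 := by
  obtain ⟨⟨σ, u, _⟩, -, -, -, hagree, -⟩ := hne
  have hn : (0 : ℝ) < n := by exact_mod_cast u.pos
  have hle : ({w | σ w = σh w}.ncard : ℝ) ≤ n := by
    exact_mod_cast (Set.ncard_le_card _).trans_eq (Nat.card_fin n)
  have h0 : (0 : ℝ) ≤ {w | σ w = σh w}.ncard := Nat.cast_nonneg _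
  constructor <;> nlinarith

theorem abs_uniformCondProb_both_sub_le {n : ℕ} {σh : Fin n → Bool} {ε : ℝ}
    (hA : 2 ≤ #{u | σh u = true}) (hG : (spinEvent n σh ε).Nonempty) (b : Bool) {s c : ℝ}
    (hs0 : 0 ≤ s) (hs1 : s ≤ 1)
    (hc : ∀ σ ∈ spinEvent n σh ε,
      |(#{u ∈ univ.filter (σh · = true) | σ u = b} : ℝ) - s * #{u | σh u = true}| ≤ c) :
    |uniformCondProb {p : (Fin n → Bool) × Fin n × Fin n | p.1 p.2.1 = b ∧ p.1 p.2.2 = b}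
        (condEvent n σh ε) - s ^ 2| ≤ (4 * c + 2) / #{u | σh u = true} := by
  have hX : (univ.filter fun u => σh u = true).offDiag.Nonempty := by
    rw [← card_pos, offDiag_card]
    exact Nat.sub_pos_of_lt (Nat.lt_mul_self_iff.2 (by omega))
  rw [condEvent_eq_coe_prod]
  refine abs_uniformCondProb_prod_sub_le hG hX _ fun σ hσ => ?_
  simp only [Set.mem_ofPred_eq]
  rw [Finset.offDiag_filter_and _ fun u => σ u = b, cast_card_offDiag, cast_card_offDiag]
  exact abs_mul_pred_div_sub_sq_le (by exact_mod_cast hA) (Nat.cast_nonneg _)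
    (by exact_mod_cast card_le_card (filter_subset _ _)) hs0 hs1 (hc σ hσ)

theorem abs_uniformCondProb_sub_le_pairError {n : ℕ} {σh : Fin n → Bool}
    (hbal : 2 * #{u | σh u = true} = n) {ε : ℝ} (hne : (condEvent n σh ε).Nonempty) :
    |uniformCondProb {p : (Fin n → Bool) × Fin n × Fin n |
        p.1 p.2.1 = true ∧ p.1 p.2.2 = true} (condEvent n σh ε) - (1 / 2 + ε) ^ 2|
      ≤ pairError n ∧
    |uniformCondProb {p : (Fin n → Bool) × Fin n × Fin n |
        p.1 p.2.1 = false ∧ p.1 p.2.2 = false} (condEvent n σh ε) - (1 / 2 - ε) ^ 2|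
      ≤ pairError n ∧
    |uniformCondProb {p : (Fin n → Bool) × Fin n × Fin n | p.1 p.2.1 = p.1 p.2.2}
        (condEvent n σh ε) - (1 / 2 + 2 * ε ^ 2)| ≤ 2 * pairError n := by
  obtain ⟨hs0, hs1⟩ := half_add_mem_Icc_of_condEvent_nonempty hne
  obtain ⟨⟨σ₀, u₀, v₀⟩, huv, hu, hv, hagree, hpos⟩ := hne
  have hA : 2 ≤ #{u | σh u = true} :=
    one_lt_card.2 ⟨u₀, by simpa using hu, v₀, by simpa using hv, huv⟩
  have hG : (spinEvent n σh ε).Nonempty :=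
    ⟨σ₀, by simp only [spinEvent, mem_filter, mem_univ, true_and]; exact ⟨hagree, hpos⟩⟩
  have hr : (4 * ((n : ℝ) ^ ((3 : ℝ) / 4) / 2) + 2) / #{u | σh u = true} = pairError n := by
    have hn : (n : ℝ) = 2 * #{u | σh u = true} := by exact_mod_cast hbal.symm
    rw [pairError, hn]
    field_simp
    ring
  have htrue := abs_uniformCondProb_both_sub_le hA hG true hs0 hs1
    fun σ hσ => abs_card_filter_true_sub_le hbal hσ
  have hfalse := abs_uniformCondProb_both_sub_le hA hG false (s := 1 / 2 - ε) (by linarith)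
    (by linarith) fun σ hσ => abs_card_filter_false_sub_le hbal hσ
  rw [hr] at htrue hfalse
  refine ⟨htrue, hfalse, ?_⟩
  rw [uniformCondProb_eq_add]
  calc _ = |(uniformCondProb _ (condEvent n σh ε) - (1 / 2 + ε) ^ 2)
          + (uniformCondProb _ (condEvent n σh ε) - (1 / 2 - ε) ^ 2)| := by ring_nf
    _ ≤ pairError n + pairError n := (abs_add_le _ _).trans (add_le_add htrue hfalse)
    _ = 2 * pairError n := (two_mul _).symm

/-- **Pairwise agreement probabilities under a balanced, positively correlated labelling.**
Let `σ` be i.i.d. uniform spins, `σh` a balanced labelling (`|{u : σh_u = +}| = n/2`),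
`f(n) = (1/n)∑ 1{σ_u = σh_u}`, `E` the event `|n₊ - n/2| < n^{3/4}`, and let `u ≠ v` be
uniformly chosen.  Fix `δ > 0`.  Uniformly over `ε ≥ δ/2` (as `n → ∞`):
`P(σ_u = σ_v = + | σh_u = σh_v = +, f(n) = 1/2+ε, E) → (1/2+ε)²`,
`P(σ_u = σ_v = - | ·) → (1/2-ε)²`, hence `P(σ_u = σ_v | ·) → 1/2 + 2ε²`; in particular there
is `N = N(δ)` such that for all `n ≥ N` and all `ε ≥ δ/2`,
`P(σ_u = σ_v | ·) ≥ 1/2 + ε²`. -/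
theorem stmt18 (δ : ℝ) (hδ : 0 < δ) :
    (∀ tol : ℝ, 0 < tol → ∃ N : ℕ, ∀ n : ℕ, N ≤ n →
      ∀ σh : Fin n → Bool, 2 * (Finset.univ.filter fun u => σh u = true).card = n →
      ∀ ε : ℝ, δ / 2 ≤ ε → (condEvent n σh ε).Nonempty →
        |uniformCondProb {p : (Fin n → Bool) × Fin n × Fin n |
              p.1 p.2.1 = true ∧ p.1 p.2.2 = true} (condEvent n σh ε)
            - (1 / 2 + ε) ^ 2| ≤ tol ∧
        |uniformCondProb {p : (Fin n → Bool) × Fin n × Fin n |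
              p.1 p.2.1 = false ∧ p.1 p.2.2 = false} (condEvent n σh ε)
            - (1 / 2 - ε) ^ 2| ≤ tol ∧
        |uniformCondProb {p : (Fin n → Bool) × Fin n × Fin n |
              p.1 p.2.1 = p.1 p.2.2} (condEvent n σh ε)
            - (1 / 2 + 2 * ε ^ 2)| ≤ tol) ∧
    (∃ N : ℕ, ∀ n : ℕ, N ≤ n →
      ∀ σh : Fin n → Bool, 2 * (Finset.univ.filter fun u => σh u = true).card = n →
      ∀ ε : ℝ, δ / 2 ≤ ε → (condEvent n σh ε).Nonempty →
        1 / 2 + ε ^ 2 ≤ uniformCondProb {p : (Fin n → Bool) × Fin n × Fin n |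
            p.1 p.2.1 = p.1 p.2.2} (condEvent n σh ε)) := by
  have hsmall : ∀ tol : ℝ, 0 < tol → ∃ N : ℕ, ∀ n ≥ N, 2 * pairError n ≤ tol :=
    fun tol htol => eventually_atTop.1 <| Tendsto.eventually_le_const htol <| by
      simpa using tendsto_pairError.const_mul 2
  refine ⟨fun tol htol => ?_, ?_⟩
  · obtain ⟨N, hN⟩ := hsmall tol htol
    refine ⟨N, fun n hn σh hbal ε _ hne => ?_⟩
    obtain ⟨htrue, hfalse, hsame⟩ := abs_uniformCondProb_sub_le_pairError hbal hne
    have hle : pairError n ≤ tol := by linarith [pairError_nonneg n, hN n hn]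
    exact ⟨htrue.trans hle, hfalse.trans hle, hsame.trans (hN n hn)⟩
  · obtain ⟨N, hN⟩ := hsmall (δ ^ 2 / 4) (by positivity)
    refine ⟨N, fun n hn σh hbal ε hε hne => ?_⟩
    have hsame := (abs_uniformCondProb_sub_le_pairError hbal hne).2.2
    have hεδ : δ ^ 2 / 4 ≤ ε ^ 2 := by nlinarith
    linarith [(abs_le.1 hsame).1, hN n hn]

end
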